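/- There exist constants A₁, A₂, A₃ > 0, depending only on n, δ, g, γ_D and the constants C_β, such that for every v = r v̂ with r = |v| ≥ 1, every t ∈ ℝ with |t| ≥ 1, and all ν₁, ν₂, ν₃ ∈ [0,1]: ‖ΔṼ^l_{|v|,t}‖_∞ ≤ A₁ (1+|v|^{ν₁/(2−ν₁)}|t|)^{−(γ_D+1)(2−ν₁)} + A₂ |v|^{ν₂/(2−ν₂)−1} (1+|v|^{ν₂/(2−ν₂)}|t|)^{−(γ_D+1/2)(2−ν₂)−1} + A₃ |v|^{2ν₃/(2−ν₃)−2} (1+|v|^{ν₃/(2−ν₃)}|t|)^{−γ_D(2−ν₃)−2}. -/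

import Mathlib

open scoped InnerProductSpace
open MeasureTheory Real Filter

set_option maxHeartbeats 1000000

noncomputable section

/-- sup-norm of the gradient of `W` : `‖∇W‖_∞ = sup_x |∇W(x)|`. -/
noncomputable def gradSup {n : ℕ} (W : EuclideanSpace ℝ (Fin n) → ℝ) : ℝ :=
  ⨆ x, ‖fderiv ℝ W x‖

/-- sup-norm of the Laplacian of `W` : `‖ΔW‖_∞ = sup_x |ΔW(x)|`. -/
noncomputable def lapSup {n : ℕ} (W : EuclideanSpace ℝ (Fin n) → ℝ) : ℝ :=
  ⨆ x, |∑ j, fderiv ℝ (fun y => fderiv ℝ W y (EuclideanSpace.single j 1)) x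
      (EuclideanSpace.single j 1)|

/-- the cut-off translated potential
`Ṽ_{|v|,t}(x) = V(x + v t + e₁ t²/2) · g(x/(λ₁|v|⟨t⟩))`, with `v = r·v̂`. -/
noncomputable def cutV {n : ℕ} (V g : EuclideanSpace ℝ (Fin n) → ℝ)
    (lam : ℝ) (vhat e1 : EuclideanSpace ℝ (Fin n)) (r t : ℝ) :
    EuclideanSpace ℝ (Fin n) → ℝ :=
  fun x => V (x + (r * t) • vhat + (t ^ 2 / 2) • e1) *
    g ((lam * r * Real.sqrt (1 + t ^ 2))⁻¹ • x)

private lemma aux_clm_deriv {n : ℕ} {φ : EuclideanSpace ℝ (Fin n) → ℝ}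
    (hφ : Differentiable ℝ (fderiv ℝ φ)) (v y : EuclideanSpace ℝ (Fin n)) :
    HasFDerivAt (fun z => fderiv ℝ φ z v)
      ((ContinuousLinearMap.apply ℝ ℝ v).comp (fderiv ℝ (fderiv ℝ φ) y)) y :=
  (ContinuousLinearMap.apply ℝ ℝ v).hasFDerivAt.comp y (hφ y).hasFDerivAt

private lemma aux_clm_diff {n : ℕ} {φ : EuclideanSpace ℝ (Fin n) → ℝ}
    (hφ : Differentiable ℝ (fderiv ℝ φ)) (v : EuclideanSpace ℝ (Fin n)) :
    Differentiable ℝ (fun z => fderiv ℝ φ z v) :=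
  fun y => (aux_clm_deriv hφ v y).differentiableAt

private lemma aux_second_apply {n : ℕ} {φ : EuclideanSpace ℝ (Fin n) → ℝ}
    (hφ : Differentiable ℝ (fderiv ℝ φ)) (v y u : EuclideanSpace ℝ (Fin n)) :
    fderiv ℝ (fun z => fderiv ℝ φ z v) y u = fderiv ℝ (fderiv ℝ φ) y u v := by
  rw [(aux_clm_deriv hφ v y).fderiv]; rfl

private lemma aux_bound {n : ℕ} {F : Type*} [NormedAddCommGroup F]
    (f : EuclideanSpace ℝ (Fin n) → F) (hf : Continuous f)
    (h0 : ∀ y, 4 < ‖y‖ → f y = 0) : ∃ M : ℝ, 1 ≤ M ∧ ∀ y, ‖f y‖ ≤ M := by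
  obtain ⟨C, hC⟩ := (isCompact_closedBall (0 : EuclideanSpace ℝ (Fin n))
    4).exists_bound_of_continuousOn hf.continuousOn
  refine ⟨max C 1, le_max_right _ _, fun y => ?_⟩
  rcases le_or_gt ‖y‖ 4 with h | h
  · exact (hC y (by simpa [Metric.mem_closedBall, dist_zero_right] using h)).trans
      (le_max_left _ _)
  · rw [h0 y h]; simp only [norm_zero]
    exact le_trans zero_le_one (le_max_right C 1)

theorem stmt_9 (n : ℕ) (hn : 2 ≤ n)
    (e1 : EuclideanSpace ℝ (Fin n))
    (he1 : e1 = EuclideanSpace.single ⟨0, by omega⟩ (1 : ℝ))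
    (vhat : EuclideanSpace ℝ (Fin n)) (hvhat : ‖vhat‖ = 1)
    (δ : ℝ) (hδ : δ = |⟪vhat, e1⟫_ℝ|) (hδ1 : δ < 1)
    (lam : ℝ) (hlam : lam = (1 - δ) / (16 * Real.sqrt 2))
    (g : EuclideanSpace ℝ (Fin n) → ℝ) (hg : ContDiff ℝ (⊤ : ℕ∞) g)
    (hg0 : ∀ y, 0 ≤ g y) (hg1 : ∀ y, g y ≤ 1)
    (hg3 : ∀ y, ‖y‖ ≤ 3 → g y = 1) (hg4 : ∀ y, 4 ≤ ‖y‖ → g y = 0)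
    (Vl : EuclideanSpace ℝ (Fin n) → ℝ) (hVl : ContDiff ℝ 2 Vl)
    (C0 C1 C2 γD : ℝ) (hC0 : 0 < C0) (hC1 : 0 < C1) (hC2 : 0 < C2)
    (hγD : 1 / 4 < γD) (hγD' : γD < 1 / 2)
    (hVb : ∀ x, |Vl x| ≤ C0 * Real.sqrt (1 + ‖x‖ ^ 2) ^ (-γD))
    (hVd1 : ∀ x, ∀ j : Fin n,
      |fderiv ℝ Vl x (EuclideanSpace.single j 1)| ≤
        C1 * Real.sqrt (1 + ‖x‖ ^ 2) ^ (-γD - 1 / 2))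
    (hVd2 : ∀ x, ∀ j k : Fin n,
      |fderiv ℝ (fun y => fderiv ℝ Vl y (EuclideanSpace.single k 1)) x
          (EuclideanSpace.single j 1)| ≤
        C2 * Real.sqrt (1 + ‖x‖ ^ 2) ^ (-γD - 1)) :
    ∃ A1 > (0 : ℝ), ∃ A2 > (0 : ℝ), ∃ A3 > (0 : ℝ),
      ∀ r : ℝ, 1 ≤ r → ∀ t : ℝ, 1 ≤ |t| →
      ∀ ν1 ∈ Set.Icc (0 : ℝ) 1, ∀ ν2 ∈ Set.Icc (0 : ℝ) 1, ∀ ν3 ∈ Set.Icc (0 : ℝ) 1,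
        lapSup (cutV Vl g lam vhat e1 r t) ≤
          A1 * (1 + r ^ (ν1 / (2 - ν1)) * |t|) ^ (-((γD + 1) * (2 - ν1))) +
          A2 * r ^ (ν2 / (2 - ν2) - 1) *
            (1 + r ^ (ν2 / (2 - ν2)) * |t|) ^ (-((γD + 1 / 2) * (2 - ν2)) - 1) +
          A3 * r ^ (2 * ν3 / (2 - ν3) - 2) *
            (1 + r ^ (ν3 / (2 - ν3)) * |t|) ^ (-(γD * (2 - ν3)) - 2) := by
  have hδ0 : 0 ≤ δ := by rw [hδ]; exact abs_nonneg _
  have hd0 : (0:ℝ) ≤ 1 - δ := by linarith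
  have hlam0 : 0 < lam := by
    rw [hlam]; apply div_pos (by linarith); positivity
  have hn0 : (0:ℝ) < (n:ℝ) := by
    have : 0 < n := by omega
    exact_mod_cast this
  have he1n : ‖e1‖ = 1 := by rw [he1, EuclideanSpace.norm_single, norm_one]
  set c₀ : ℝ := 3 / 8 * Real.sqrt (1 - δ) with hc₀def
  have hsd1 : Real.sqrt (1 - δ) ≤ 1 := by
    have := Real.sqrt_le_sqrt (show 1 - δ ≤ 1 by linarith)
    rwa [Real.sqrt_one] at this
  have hc₀0 : 0 < c₀ := by
    rw [hc₀def]
    have : 0 < Real.sqrt (1 - δ) := Real.sqrt_pos.2 (by linarith)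
    linarith
  have hc₀1 : c₀ ≤ 1 := by rw [hc₀def]; linarith
  set K : ℝ := c₀ ^ (-(3:ℝ)) * (2:ℝ) ^ (6:ℝ) with hKdef
  have hK0 : 0 < K := by
    rw [hKdef]
    exact mul_pos (Real.rpow_pos_of_pos hc₀0 _) (Real.rpow_pos_of_pos two_pos _)
  -- bounds for derivatives of g
  have hg1d : ContDiff ℝ (⊤ : ℕ∞) (fderiv ℝ g) := hg.fderiv_right (m := (⊤ : ℕ∞)) (by simp)
  have hgz1 : ∀ y : EuclideanSpace ℝ (Fin n), 4 < ‖y‖ → fderiv ℝ g y = 0 := by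
    intro y hy
    have hopen : IsOpen {z : EuclideanSpace ℝ (Fin n) | 4 < ‖z‖} :=
      isOpen_lt continuous_const continuous_norm
    have hev : g =ᶠ[nhds y] (fun _ => (0 : ℝ)) :=
      Filter.eventuallyEq_of_mem (hopen.mem_nhds hy) (fun z hz => hg4 z (le_of_lt hz))
    rw [hev.fderiv_eq]
    exact fderiv_const_apply 0
  have hgz2 : ∀ y : EuclideanSpace ℝ (Fin n), 4 < ‖y‖ → fderiv ℝ (fderiv ℝ g) y = 0 := by
    intro y hy
    have hopen : IsOpen {z : EuclideanSpace ℝ (Fin n) | 4 < ‖z‖} :=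
      isOpen_lt continuous_const continuous_norm
    have hev : fderiv ℝ g =ᶠ[nhds y]
        (fun _ => (0 : EuclideanSpace ℝ (Fin n) →L[ℝ] ℝ)) :=
      Filter.eventuallyEq_of_mem (hopen.mem_nhds hy) (fun z hz => hgz1 z hz)
    rw [hev.fderiv_eq]
    exact fderiv_const_apply 0
  obtain ⟨M1, hM1ge, hM1⟩ := aux_bound (fderiv ℝ g) hg1d.continuous hgz1
  obtain ⟨M2, hM2ge, hM2⟩ := aux_bound (fderiv ℝ (fderiv ℝ g))
    (hg1d.fderiv_right (m := (⊤ : ℕ∞)) (by simp)).continuous hgz2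
  have hM10 : (0:ℝ) < M1 := lt_of_lt_of_le one_pos hM1ge
  have hM20 : (0:ℝ) < M2 := lt_of_lt_of_le one_pos hM2ge
  -- differentiability
  have hVdiff : Differentiable ℝ Vl := hVl.differentiable (by simp)
  have hgd : Differentiable ℝ g := hg.differentiable (by simp)
  have hV' : Differentiable ℝ (fderiv ℝ Vl) :=
    (hVl.fderiv_right (m := 1) (by norm_num)).differentiable (by simp)
  have hg'd : Differentiable ℝ (fderiv ℝ g) := hg1d.differentiable (by simp)
  refine ⟨(n:ℝ) * (C2 * K), mul_pos hn0 (mul_pos hC2 hK0),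
    (n:ℝ) * (4 * C1 * M1 * K / lam),
    mul_pos hn0 (div_pos (by positivity) hlam0),
    (n:ℝ) * (4 * C0 * M2 * K / lam ^ 2),
    mul_pos hn0 (div_pos (by positivity) (by positivity)), ?_⟩
  intro r hr t ht ν1 hν1 ν2 hν2 ν3 hν3
  have hr0 : (0:ℝ) < r := lt_of_lt_of_le one_pos hr
  have ht0 : (0:ℝ) < |t| := lt_of_lt_of_le one_pos ht
  set m : ℝ := max (r * |t|) (t ^ 2) with hmdef
  have hm1 : 1 ≤ m := by
    have h1 : (1:ℝ) ≤ r * |t| := le_trans ht (le_mul_of_one_le_left (abs_nonneg t) hr)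
    have h2 := le_max_left (r * |t|) (t ^ 2)
    rw [← hmdef] at h2
    linarith
  have hm0 : (0:ℝ) < m := lt_of_lt_of_le one_pos hm1
  have hmm : max (r * |t|) (t ^ 2) ≤ m := hmdef.ge
  -- ====== the key rpow inequality ======
  have key : ∀ p ν : ℝ, 0 < p → p ≤ 3 → 0 ≤ ν → ν ≤ 1 → ∀ Y : ℝ, c₀ * m ≤ Y →
      Y ^ (-p) ≤ K * (1 + r ^ (ν / (2 - ν)) * |t|) ^ (-(p * (2 - ν))) := by
    intro p ν hp hp3 hν0 hν1' Y hY
    rw [hKdef]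
    have h2ν : (0:ℝ) < 2 - ν := by linarith
    set a := ν / (2 - ν) with hadef
    have ha0 : 0 ≤ a := div_nonneg hν0 h2ν.le
    have ha1 : a ≤ 1 := by rw [hadef, div_le_one h2ν]; linarith
    have h1a0 : (0:ℝ) < 1 + a := by linarith
    have hexp : 2 * p / (1 + a) = p * (2 - ν) := by
      rw [hadef, show 1 + ν / (2 - ν) = 2 / (2 - ν) by field_simp; ring]
      field_simp
    clear_value a
    set X := 1 + r ^ a * |t| with hXdef
    have hra1 : (1:ℝ) ≤ r ^ a := Real.one_le_rpow hr ha0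
    have hrt1 : (1:ℝ) ≤ r ^ a * |t| :=
      le_trans ht (le_mul_of_one_le_left (abs_nonneg t) hra1)
    have hX0 : (0:ℝ) < X := by rw [hXdef]; linarith
    clear_value X
    have e1' : (r * |t|) ^ a * (t ^ 2) ^ ((1 - a) / 2) = r ^ a * |t| := by
      rw [Real.mul_rpow hr0.le (abs_nonneg t), ← sq_abs t, ← Real.rpow_natCast |t| 2,
        ← Real.rpow_mul (abs_nonneg t), mul_assoc, ← Real.rpow_add ht0]
      have hcexp : a + ((2:ℕ):ℝ) * ((1 - a) / 2) = 1 := by push_cast; ring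
      rw [hcexp, Real.rpow_one]
    have hs1 : X ≤ 2 * m ^ ((1 + a) / 2) := by
      have b1 : (r * |t|) ^ a ≤ m ^ a :=
        Real.rpow_le_rpow (by positivity) (le_trans (le_max_left _ _) hmm) ha0
      have b2 : (t ^ 2) ^ ((1 - a) / 2) ≤ m ^ ((1 - a) / 2) :=
        Real.rpow_le_rpow (by positivity) (le_trans (le_max_right _ _) hmm) (by linarith)
      have b3 : r ^ a * |t| ≤ m ^ a * m ^ ((1 - a) / 2) := by
        rw [← e1']
        exact mul_le_mul b1 b2 (by positivity) (by positivity)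
      have b4 : m ^ a * m ^ ((1 - a) / 2) = m ^ ((1 + a) / 2) := by
        rw [← Real.rpow_add hm0]
        congr 1
        ring
      have b5 : (1:ℝ) ≤ m ^ ((1 + a) / 2) := Real.one_le_rpow hm1 (by linarith)
      rw [hXdef]
      rw [b4] at b3
      linarith
    set q := 2 * p / (1 + a) with hqdef
    have hq0 : 0 < q := div_pos (by linarith) h1a0
    have hq6 : q ≤ 6 := by
      rw [hqdef, div_le_iff₀ h1a0]; linarith
    have hq2 : (1 + a) / 2 * q = p := by
      rw [hqdef]; field_simp
    clear_value q
    have hXqpos : 0 < X ^ q := Real.rpow_pos_of_pos hX0 q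
    have hmp : 0 < m ^ p := Real.rpow_pos_of_pos hm0 p
    have hXq : X ^ q ≤ 2 ^ q * m ^ p := by
      calc X ^ q ≤ (2 * m ^ ((1 + a) / 2)) ^ q :=
            Real.rpow_le_rpow hX0.le hs1 hq0.le
        _ = 2 ^ q * (m ^ ((1 + a) / 2)) ^ q :=
            Real.mul_rpow (by norm_num) (Real.rpow_nonneg hm0.le _)
        _ = 2 ^ q * m ^ p := by
            rw [← Real.rpow_mul hm0.le, hq2]
    have hc3 : (0:ℝ) ≤ c₀ ^ (-(3:ℝ)) := Real.rpow_nonneg hc₀0.le _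
    have h2q0 : (0:ℝ) < 2 ^ q := Real.rpow_pos_of_pos two_pos q
    calc Y ^ (-p) ≤ (c₀ * m) ^ (-p) :=
          Real.rpow_le_rpow_of_nonpos (by positivity) hY (by linarith)
      _ = c₀ ^ (-p) * m ^ (-p) := Real.mul_rpow hc₀0.le hm0.le
      _ ≤ c₀ ^ (-(3:ℝ)) * m ^ (-p) := by
          have := Real.rpow_le_rpow_of_exponent_ge hc₀0 hc₀1 (by linarith : -(3:ℝ) ≤ -p)
          exact mul_le_mul_of_nonneg_right this (Real.rpow_nonneg hm0.le _)
      _ = c₀ ^ (-(3:ℝ)) * (m ^ p)⁻¹ := by rw [Real.rpow_neg hm0.le]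
      _ ≤ c₀ ^ (-(3:ℝ)) * (2 ^ q * (X ^ q)⁻¹) := by
          refine mul_le_mul_of_nonneg_left ?_ hc3
          calc (m ^ p)⁻¹ = 2 ^ q * (2 ^ q * m ^ p)⁻¹ := by field_simp
            _ ≤ 2 ^ q * (X ^ q)⁻¹ := by
                refine mul_le_mul_of_nonneg_left ?_ h2q0.le
                exact inv_anti₀ hXqpos hXq
      _ ≤ c₀ ^ (-(3:ℝ)) * (2 ^ (6:ℝ) * (X ^ q)⁻¹) := by
          refine mul_le_mul_of_nonneg_left ?_ hc3
          exact mul_le_mul_of_nonneg_right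
            (Real.rpow_le_rpow_of_exponent_le one_le_two hq6) (inv_nonneg.2 hXqpos.le)
      _ = (c₀ ^ (-(3:ℝ)) * (2:ℝ) ^ (6:ℝ)) * X ^ (-q) := by
          rw [Real.rpow_neg hX0.le]; ring
      _ = (c₀ ^ (-(3:ℝ)) * (2:ℝ) ^ (6:ℝ)) * X ^ (-(p * (2 - ν))) := by
          rw [hexp]
  -- ====== auxiliary inequalities ======
  have hXfacts : ∀ ν : ℝ, 0 ≤ ν → ν ≤ 1 → 1 ≤ r ^ (ν / (2 - ν)) * |t| := by
    intro ν h0 h1'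
    have h2ν : (0:ℝ) < 2 - ν := by linarith
    have h := Real.one_le_rpow hr (div_nonneg h0 h2ν.le)
    exact le_trans ht (le_mul_of_one_le_left (abs_nonneg t) h)
  have hXpos : ∀ ν : ℝ, 0 ≤ ν → ν ≤ 1 → (0:ℝ) < 1 + r ^ (ν / (2 - ν)) * |t| :=
    fun ν h0 h1' => by linarith [hXfacts ν h0 h1']
  have hrtinv : ∀ ν : ℝ, 0 ≤ ν → ν ≤ 1 →
      (r * |t|)⁻¹ ≤ 2 * r ^ (ν / (2 - ν) - 1) *
        (1 + r ^ (ν / (2 - ν)) * |t|) ^ (-(1:ℝ)) := by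
    intro ν h0 h1'
    have h2ν : (0:ℝ) < 2 - ν := by linarith
    have hra : 0 < r ^ (ν / (2 - ν)) := Real.rpow_pos_of_pos hr0 _
    have h1m : 1 ≤ r ^ (ν / (2 - ν)) * |t| := hXfacts ν h0 h1'
    have hXle : 1 + r ^ (ν / (2 - ν)) * |t| ≤ 2 * (r ^ (ν / (2 - ν)) * |t|) := by linarith
    have hXp : 0 < 1 + r ^ (ν / (2 - ν)) * |t| := by linarith
    rw [Real.rpow_neg_one, Real.rpow_sub hr0, Real.rpow_one]
    calc (r * |t|)⁻¹
        = 2 * (r ^ (ν / (2 - ν)) / r) * (2 * (r ^ (ν / (2 - ν)) * |t|))⁻¹ := by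
          field_simp
      _ ≤ 2 * (r ^ (ν / (2 - ν)) / r) * (1 + r ^ (ν / (2 - ν)) * |t|)⁻¹ := by
          refine mul_le_mul_of_nonneg_left (inv_anti₀ hXp hXle) ?_
          exact mul_nonneg (by norm_num) (div_nonneg hra.le hr0.le)
  -- ====== set up s and w ======
  have hts : |t| ≤ Real.sqrt (1 + t ^ 2) := by
    rw [show |t| = Real.sqrt (|t| ^ 2) from (Real.sqrt_sq (abs_nonneg t)).symm]
    apply Real.sqrt_le_sqrt
    linarith [sq_abs t]
  have hsqpos : 0 < Real.sqrt (1 + t ^ 2) := Real.sqrt_pos.2 (by positivity)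
  set s : ℝ := lam * r * Real.sqrt (1 + t ^ 2) with hsdef
  have hs0 : 0 < s := by rw [hsdef]; exact mul_pos (mul_pos hlam0 hr0) hsqpos
  have hsi0 : (0:ℝ) ≤ s⁻¹ := (inv_pos.2 hs0).le
  have hsinv : s⁻¹ ≤ (lam * (r * |t|))⁻¹ := by
    apply inv_anti₀ (mul_pos hlam0 (mul_pos hr0 ht0))
    rw [hsdef]
    calc lam * (r * |t|) = lam * r * |t| := by ring
      _ ≤ lam * r * Real.sqrt (1 + t ^ 2) :=
          mul_le_mul_of_nonneg_left hts (mul_nonneg hlam0.le hr0.le)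
  set w : EuclideanSpace ℝ (Fin n) := (r * t) • vhat + (t ^ 2 / 2) • e1 with hwdef
  have hcut : cutV Vl g lam vhat e1 r t = fun x => Vl (x + w) * g (s⁻¹ • x) := by
    funext x
    simp only [cutV]
    rw [hwdef, hsdef, add_assoc]
  -- ====== geometric lower bound ======
  have hgeo : ∀ x : EuclideanSpace ℝ (Fin n), ‖x‖ ≤ 4 * s →
      c₀ * m ≤ Real.sqrt (1 + ‖x + w‖ ^ 2) := by
    intro x hx4
    rw [hsdef] at hx4
    rw [hc₀def, hmdef, hwdef]
    have hx4' : ‖x‖ ≤ 4 * (lam * r * Real.sqrt (1 + t ^ 2)) := hx4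
    have hnorm : ‖(r * t) • vhat + (t ^ 2 / 2) • e1‖ ^ 2
        = r ^ 2 * t ^ 2 + r * t ^ 3 * (⟪vhat, e1⟫_ℝ) + t ^ 4 / 4 := by
      rw [norm_add_sq_real, real_inner_smul_left, real_inner_smul_right,
        norm_smul, norm_smul, hvhat, he1n]
      simp only [Real.norm_eq_abs, mul_one]
      rw [sq_abs, sq_abs]
      ring
    have e2 : |t| ^ 2 = t ^ 2 := sq_abs t
    have e4 : |t| ^ 4 = t ^ 4 := by
      rw [show (4:ℕ) = 2 * 2 from rfl, pow_mul, pow_mul, e2]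
    have hcross : -(δ * (r * |t| ^ 3)) ≤ r * t ^ 3 * ⟪vhat, e1⟫_ℝ := by
      have h1 : |r * t ^ 3 * ⟪vhat, e1⟫_ℝ| = δ * (r * |t| ^ 3) := by
        rw [abs_mul, abs_mul, abs_of_nonneg hr0.le, abs_pow, ← hδ]
        ring
      have h2 := neg_abs_le (r * t ^ 3 * ⟪vhat, e1⟫_ℝ)
      rw [h1] at h2
      exact h2
    have key0 : δ * (r * |t| ^ 3) ≤ δ * (r ^ 2 * |t| ^ 2 + |t| ^ 4 / 4) := by
      have hsq := mul_nonneg hδ0 (sq_nonneg (r * |t| - |t| ^ 2 / 2))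
      have hexpand : δ * (r * |t| - |t| ^ 2 / 2) ^ 2
          = δ * (r ^ 2 * |t| ^ 2) - δ * (r * |t| ^ 3) + δ * (|t| ^ 4 / 4) := by ring
      rw [hexpand] at hsq
      linarith
    rw [e2, e4] at key0
    have hwsq : (1 - δ) * (r ^ 2 * t ^ 2 + t ^ 4 / 4)
        ≤ ‖(r * t) • vhat + (t ^ 2 / 2) • e1‖ ^ 2 := by
      linarith [hnorm.ge, hcross, key0]
    set B := Real.sqrt (r ^ 2 * t ^ 2 + t ^ 4 / 4) with hBdef
    have hB0 : 0 ≤ B := Real.sqrt_nonneg _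
    have hB : Real.sqrt (1 - δ) * B ≤ ‖(r * t) • vhat + (t ^ 2 / 2) • e1‖ := by
      rw [hBdef, ← Real.sqrt_mul hd0]
      refine le_trans (Real.sqrt_le_sqrt hwsq) ?_
      rw [Real.sqrt_sq (norm_nonneg _)]
    have hBrt : r * |t| ≤ B := by
      rw [hBdef, show r * |t| = Real.sqrt ((r * |t|) ^ 2) from
        (Real.sqrt_sq (by positivity)).symm]
      apply Real.sqrt_le_sqrt
      have hh : (r * |t|) ^ 2 = r ^ 2 * t ^ 2 := by rw [mul_pow, e2]
      have h4' : (0:ℝ) ≤ t ^ 4 := by positivity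
      linarith
    have hBt : t ^ 2 / 2 ≤ B := by
      rw [hBdef, show t ^ 2 / 2 = Real.sqrt ((t ^ 2 / 2) ^ 2) from
        (Real.sqrt_sq (by positivity)).symm]
      apply Real.sqrt_le_sqrt
      have hh : (t ^ 2 / 2) ^ 2 = t ^ 4 / 4 := by ring
      have h5' := sq_nonneg (r * t)
      have h6' : (r * t) ^ 2 = r ^ 2 * t ^ 2 := by ring
      linarith
    have hmB : max (r * |t|) (t ^ 2) ≤ 2 * B := by
      apply max_le <;> linarith
    have hsd : 1 - δ ≤ Real.sqrt (1 - δ) := by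
      calc 1 - δ = Real.sqrt (1 - δ) * Real.sqrt (1 - δ) := (Real.mul_self_sqrt hd0).symm
        _ ≤ Real.sqrt (1 - δ) * 1 := mul_le_mul_of_nonneg_left hsd1 (Real.sqrt_nonneg _)
        _ = Real.sqrt (1 - δ) := mul_one _
    have hsq2 : Real.sqrt (1 + t ^ 2) ≤ Real.sqrt 2 * |t| := by
      rw [show Real.sqrt 2 * |t| = Real.sqrt (2 * |t| ^ 2) by
        rw [Real.sqrt_mul (by norm_num), Real.sqrt_sq (abs_nonneg t)]]
      apply Real.sqrt_le_sqrt
      have h1' : (1:ℝ) ≤ |t| ^ 2 := one_le_pow₀ ht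
      linarith [sq_abs t]
    have hxb : ‖x‖ ≤ Real.sqrt (1 - δ) * B / 4 := by
      have hs2 : Real.sqrt 2 ≠ 0 := by positivity
      have h42 : 4 * lam * Real.sqrt 2 = (1 - δ) / 4 := by
        rw [hlam]; field_simp; ring
      have step1 : ‖x‖ ≤ 4 * lam * r * (Real.sqrt 2 * |t|) := by
        refine le_trans hx4' ?_
        have h := mul_le_mul_of_nonneg_left hsq2
          (mul_nonneg (mul_nonneg (by norm_num : (0:ℝ) ≤ 4) hlam0.le) hr0.le)
        linarith [h]
      have step2 : 4 * lam * r * (Real.sqrt 2 * |t|) = (1 - δ) / 4 * (r * |t|) := by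
        linear_combination (r * |t|) * h42
      have step3 : (1 - δ) / 4 * (r * |t|) ≤ Real.sqrt (1 - δ) / 4 * B := by
        have h1 : (1 - δ) * (r * |t|) ≤ Real.sqrt (1 - δ) * B :=
          mul_le_mul hsd hBrt (by positivity) (Real.sqrt_nonneg _)
        linarith
      linarith [step2.le, step2.ge]
    have h1 : Real.sqrt (1 - δ) * B - ‖x‖ ≤ ‖x + ((r * t) • vhat + (t ^ 2 / 2) • e1)‖ := by
      have h2 : ‖(r * t) • vhat + (t ^ 2 / 2) • e1‖
          ≤ ‖x + ((r * t) • vhat + (t ^ 2 / 2) • e1)‖ + ‖x‖ := by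
        calc ‖(r * t) • vhat + (t ^ 2 / 2) • e1‖
            = ‖x + ((r * t) • vhat + (t ^ 2 / 2) • e1) + -x‖ := by
              rw [show x + ((r * t) • vhat + (t ^ 2 / 2) • e1) + -x
                = (r * t) • vhat + (t ^ 2 / 2) • e1 by abel]
          _ ≤ ‖x + ((r * t) • vhat + (t ^ 2 / 2) • e1)‖ + ‖x‖ :=
              le_trans (norm_add_le _ _) (by rw [norm_neg])
      linarith
    have h3 : ‖x + ((r * t) • vhat + (t ^ 2 / 2) • e1)‖
        ≤ Real.sqrt (1 + ‖x + ((r * t) • vhat + (t ^ 2 / 2) • e1)‖ ^ 2) :=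
      (Real.le_sqrt (norm_nonneg _) (by positivity)).2
        (by linarith [sq_nonneg ‖x + ((r * t) • vhat + (t ^ 2 / 2) • e1)‖])
    have h4 : (3 / 8 * Real.sqrt (1 - δ)) * max (r * |t|) (t ^ 2)
        ≤ 3 / 4 * (Real.sqrt (1 - δ) * B) := by
      have h := mul_le_mul_of_nonneg_left hmB
        (mul_nonneg (by norm_num : (0:ℝ) ≤ 3 / 8) (Real.sqrt_nonneg (1 - δ)))
      linarith [h]
    linarith
  -- ====== the three target bound terms ======
  set b1 : ℝ := C2 * K * (1 + r ^ (ν1 / (2 - ν1)) * |t|) ^ (-((γD + 1) * (2 - ν1)))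
    with hb1def
  set b2 : ℝ := 4 * C1 * M1 * K / lam * r ^ (ν2 / (2 - ν2) - 1) *
    (1 + r ^ (ν2 / (2 - ν2)) * |t|) ^ (-((γD + 1 / 2) * (2 - ν2)) - 1) with hb2def
  set b3 : ℝ := 4 * C0 * M2 * K / lam ^ 2 * r ^ (2 * ν3 / (2 - ν3) - 2) *
    (1 + r ^ (ν3 / (2 - ν3)) * |t|) ^ (-(γD * (2 - ν3)) - 2) with hb3def
  have hX1pos : (0:ℝ) < 1 + r ^ (ν1 / (2 - ν1)) * |t| := hXpos ν1 hν1.1 hν1.2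
  have hX2pos : (0:ℝ) < 1 + r ^ (ν2 / (2 - ν2)) * |t| := hXpos ν2 hν2.1 hν2.2
  have hX3pos : (0:ℝ) < 1 + r ^ (ν3 / (2 - ν3)) * |t| := hXpos ν3 hν3.1 hν3.2
  have hb1nn : 0 ≤ b1 := by
    rw [hb1def]
    exact mul_nonneg (mul_nonneg hC2.le hK0.le) (Real.rpow_nonneg hX1pos.le _)
  have hb2nn : 0 ≤ b2 := by
    rw [hb2def]
    exact mul_nonneg (mul_nonneg (div_nonneg (by positivity) hlam0.le)
      (Real.rpow_nonneg hr0.le _)) (Real.rpow_nonneg hX2pos.le _)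
  have hb3nn : 0 ≤ b3 := by
    rw [hb3def]
    exact mul_nonneg (mul_nonneg (div_nonneg (by positivity) (by positivity))
      (Real.rpow_nonneg hr0.le _)) (Real.rpow_nonneg hX3pos.le _)
  -- ====== pointwise bound ======
  have hpoint : ∀ x : EuclideanSpace ℝ (Fin n),
      |∑ j, fderiv ℝ (fun y => fderiv ℝ (fun x => Vl (x + w) * g (s⁻¹ • x)) y
          (EuclideanSpace.single j 1)) x (EuclideanSpace.single j 1)|
        ≤ (n:ℝ) * (b1 + b2 + b3) := by
    intro x
    have hj : ∀ j : Fin n,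
        |fderiv ℝ (fun y => fderiv ℝ (fun x => Vl (x + w) * g (s⁻¹ • x)) y
          (EuclideanSpace.single j 1)) x (EuclideanSpace.single j 1)|
          ≤ b1 + b2 + b3 := by
      intro j
      set ej : EuclideanSpace ℝ (Fin n) := EuclideanSpace.single j 1 with hejdef
      have hejn : ‖ej‖ = 1 := by rw [hejdef, EuclideanSpace.norm_single, norm_one]
      have hVj : Differentiable ℝ (fun z => fderiv ℝ Vl z ej) := aux_clm_diff hV' ej
      have hgj : Differentiable ℝ (fun z => fderiv ℝ g z ej) := aux_clm_diff hg'd ej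
      -- first derivative
      have e_first : (fun y => fderiv ℝ (fun x => Vl (x + w) * g (s⁻¹ • x)) y ej)
          = (fun y => fderiv ℝ Vl (y + w) ej * g (s⁻¹ • y)
            + Vl (y + w) * (s⁻¹ * fderiv ℝ g (s⁻¹ • y) ej)) := by
        funext y
        have h1 : HasFDerivAt (fun z : EuclideanSpace ℝ (Fin n) => z + w)
            (ContinuousLinearMap.id ℝ (EuclideanSpace ℝ (Fin n))) y :=
          (hasFDerivAt_id y).add_const w
        have h2 : HasFDerivAt (fun z : EuclideanSpace ℝ (Fin n) => s⁻¹ • z)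
            (s⁻¹ • ContinuousLinearMap.id ℝ (EuclideanSpace ℝ (Fin n))) y :=
          (hasFDerivAt_id y).const_smul s⁻¹
        have h3 : HasFDerivAt (fun x => Vl (x + w) * g (s⁻¹ • x))
            (Vl (y + w) • ((fderiv ℝ g (s⁻¹ • y)).comp
                (s⁻¹ • ContinuousLinearMap.id ℝ (EuclideanSpace ℝ (Fin n))))
              + g (s⁻¹ • y) • ((fderiv ℝ Vl (y + w)).comp
                (ContinuousLinearMap.id ℝ (EuclideanSpace ℝ (Fin n))))) y :=
          ((hVdiff (y + w)).hasFDerivAt.comp y h1).mul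
            ((hgd (s⁻¹ • y)).hasFDerivAt.comp y h2)
        rw [h3.fderiv]
        simp only [ContinuousLinearMap.add_apply, ContinuousLinearMap.coe_smul',
          Pi.smul_apply, ContinuousLinearMap.coe_comp', Function.comp_apply,
          ContinuousLinearMap.id_apply, _root_.map_smul, smul_eq_mul]
        ring
      -- second derivative
      have h1 : HasFDerivAt (fun z : EuclideanSpace ℝ (Fin n) => z + w)
          (ContinuousLinearMap.id ℝ (EuclideanSpace ℝ (Fin n))) x :=
        (hasFDerivAt_id x).add_const w
      have h2 : HasFDerivAt (fun z : EuclideanSpace ℝ (Fin n) => s⁻¹ • z)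
          (s⁻¹ • ContinuousLinearMap.id ℝ (EuclideanSpace ℝ (Fin n))) x :=
        (hasFDerivAt_id x).const_smul s⁻¹
      have k1 : HasFDerivAt (fun z => fderiv ℝ Vl (z + w) ej)
          ((fderiv ℝ (fun z => fderiv ℝ Vl z ej) (x + w)).comp
            (ContinuousLinearMap.id ℝ (EuclideanSpace ℝ (Fin n)))) x :=
        by have := (hVj (x + w)).hasFDerivAt.comp x h1; exact this
      have k2 : HasFDerivAt (fun z => g (s⁻¹ • z))
          ((fderiv ℝ g (s⁻¹ • x)).comp
            (s⁻¹ • ContinuousLinearMap.id ℝ (EuclideanSpace ℝ (Fin n)))) x :=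
        (hgd (s⁻¹ • x)).hasFDerivAt.comp x h2
      have k3 : HasFDerivAt (fun z => Vl (z + w))
          ((fderiv ℝ Vl (x + w)).comp
            (ContinuousLinearMap.id ℝ (EuclideanSpace ℝ (Fin n)))) x :=
        (hVdiff (x + w)).hasFDerivAt.comp x h1
      have k4 : HasFDerivAt (fun z => s⁻¹ * fderiv ℝ g (s⁻¹ • z) ej)
          (s⁻¹ • ((fderiv ℝ (fun z => fderiv ℝ g z ej) (s⁻¹ • x)).comp
            (s⁻¹ • ContinuousLinearMap.id ℝ (EuclideanSpace ℝ (Fin n))))) x :=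
        ((hgj (s⁻¹ • x)).hasFDerivAt.comp x h2).const_mul s⁻¹
      have ktot : HasFDerivAt (fun y => fderiv ℝ Vl (y + w) ej * g (s⁻¹ • y)
          + Vl (y + w) * (s⁻¹ * fderiv ℝ g (s⁻¹ • y) ej))
          ((fderiv ℝ Vl (x + w) ej • ((fderiv ℝ g (s⁻¹ • x)).comp
              (s⁻¹ • ContinuousLinearMap.id ℝ (EuclideanSpace ℝ (Fin n))))
            + g (s⁻¹ • x) • ((fderiv ℝ (fun z => fderiv ℝ Vl z ej) (x + w)).comp
              (ContinuousLinearMap.id ℝ (EuclideanSpace ℝ (Fin n)))))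
           + (Vl (x + w) • (s⁻¹ • ((fderiv ℝ (fun z => fderiv ℝ g z ej) (s⁻¹ • x)).comp
              (s⁻¹ • ContinuousLinearMap.id ℝ (EuclideanSpace ℝ (Fin n)))))
            + (s⁻¹ * fderiv ℝ g (s⁻¹ • x) ej) • ((fderiv ℝ Vl (x + w)).comp
              (ContinuousLinearMap.id ℝ (EuclideanSpace ℝ (Fin n)))))) x :=
        (k1.mul k2).add (k3.mul k4)
      have e_sec : fderiv ℝ (fun y => fderiv ℝ (fun x => Vl (x + w) * g (s⁻¹ • x)) y ej) x ej
          = fderiv ℝ (fun z => fderiv ℝ Vl z ej) (x + w) ej * g (s⁻¹ • x)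
            + 2 * (fderiv ℝ Vl (x + w) ej * (s⁻¹ * fderiv ℝ g (s⁻¹ • x) ej))
            + Vl (x + w) * (s⁻¹ * (s⁻¹ *
              fderiv ℝ (fun z => fderiv ℝ g z ej) (s⁻¹ • x) ej)) := by
        rw [e_first, ktot.fderiv]
        simp only [ContinuousLinearMap.add_apply, ContinuousLinearMap.coe_smul',
          Pi.smul_apply, ContinuousLinearMap.coe_comp', Function.comp_apply,
          ContinuousLinearMap.id_apply, _root_.map_smul, smul_eq_mul]
        ring
      rw [e_sec]
      rcases le_or_gt ‖s⁻¹ • x‖ 4 with hc4 | hc4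
      · -- near case
        have hx4 : ‖x‖ ≤ 4 * s := by
          have hnx : ‖s⁻¹ • x‖ = s⁻¹ * ‖x‖ := by
            rw [norm_smul, Real.norm_eq_abs, abs_of_nonneg hsi0]
          rw [hnx] at hc4
          have := mul_le_mul_of_nonneg_left hc4 hs0.le
          calc ‖x‖ = s * (s⁻¹ * ‖x‖) := by field_simp
            _ ≤ s * 4 := this
            _ = 4 * s := by ring
        have hY : c₀ * m ≤ Real.sqrt (1 + ‖x + w‖ ^ 2) := hgeo x hx4
        -- factor bounds
        have bV2 : |fderiv ℝ (fun z => fderiv ℝ Vl z ej) (x + w) ej|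
            ≤ C2 * Real.sqrt (1 + ‖x + w‖ ^ 2) ^ (-(γD + 1)) := by
          have h := hVd2 (x + w) j j
          rw [show -γD - 1 = -(γD + 1) from by ring] at h
          exact h
        have bV1 : |fderiv ℝ Vl (x + w) ej|
            ≤ C1 * Real.sqrt (1 + ‖x + w‖ ^ 2) ^ (-(γD + 1 / 2)) := by
          have h := hVd1 (x + w) j
          rw [show -γD - 1 / 2 = -(γD + 1 / 2) from by ring] at h
          exact h
        have bV0 : |Vl (x + w)| ≤ C0 * Real.sqrt (1 + ‖x + w‖ ^ 2) ^ (-γD) := hVb _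
        have bg0 : |g (s⁻¹ • x)| ≤ 1 :=
          abs_le.2 ⟨by linarith [hg0 (s⁻¹ • x)], hg1 _⟩
        have bg1 : |fderiv ℝ g (s⁻¹ • x) ej| ≤ M1 := by
          have h := (fderiv ℝ g (s⁻¹ • x)).le_opNorm ej
          rw [hejn, mul_one] at h
          calc |fderiv ℝ g (s⁻¹ • x) ej| = ‖fderiv ℝ g (s⁻¹ • x) ej‖ :=
              (Real.norm_eq_abs _).symm
            _ ≤ ‖fderiv ℝ g (s⁻¹ • x)‖ := h
            _ ≤ M1 := hM1 _
        have bg2 : |fderiv ℝ (fun z => fderiv ℝ g z ej) (s⁻¹ • x) ej| ≤ M2 := by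
          rw [aux_second_apply hg'd ej]
          have h1' := (fderiv ℝ (fderiv ℝ g) (s⁻¹ • x)).le_opNorm ej
          rw [hejn, mul_one] at h1'
          have h2' := (fderiv ℝ (fderiv ℝ g) (s⁻¹ • x) ej).le_opNorm ej
          rw [hejn, mul_one] at h2'
          calc |fderiv ℝ (fderiv ℝ g) (s⁻¹ • x) ej ej|
              = ‖fderiv ℝ (fderiv ℝ g) (s⁻¹ • x) ej ej‖ := (Real.norm_eq_abs _).symm
            _ ≤ ‖fderiv ℝ (fderiv ℝ g) (s⁻¹ • x) ej‖ := h2'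
            _ ≤ ‖fderiv ℝ (fderiv ℝ g) (s⁻¹ • x)‖ := h1'
            _ ≤ M2 := hM2 _
        have hYnn : (0:ℝ) ≤ Real.sqrt (1 + ‖x + w‖ ^ 2) := Real.sqrt_nonneg _
        have hltinv0 : (0:ℝ) ≤ (lam * (r * |t|))⁻¹ :=
          (inv_pos.2 (mul_pos hlam0 (mul_pos hr0 ht0))).le
        -- term 1
        have hT1 : |fderiv ℝ (fun z => fderiv ℝ Vl z ej) (x + w) ej * g (s⁻¹ • x)| ≤ b1 := by
          have key1 := key (γD + 1) ν1 (by linarith) (by linarith) hν1.1 hν1.2 _ hY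
          calc |fderiv ℝ (fun z => fderiv ℝ Vl z ej) (x + w) ej * g (s⁻¹ • x)|
              = |fderiv ℝ (fun z => fderiv ℝ Vl z ej) (x + w) ej| * |g (s⁻¹ • x)| :=
                abs_mul _ _
            _ ≤ (C2 * Real.sqrt (1 + ‖x + w‖ ^ 2) ^ (-(γD + 1))) * 1 :=
                mul_le_mul bV2 bg0 (abs_nonneg _)
                  (mul_nonneg hC2.le (Real.rpow_nonneg hYnn _))
            _ = C2 * Real.sqrt (1 + ‖x + w‖ ^ 2) ^ (-(γD + 1)) := mul_one _
            _ ≤ C2 * (K * (1 + r ^ (ν1 / (2 - ν1)) * |t|) ^ (-((γD + 1) * (2 - ν1)))) :=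
                mul_le_mul_of_nonneg_left key1 hC2.le
            _ = b1 := by rw [hb1def]; ring
        -- term 2
        have hT2 : |2 * (fderiv ℝ Vl (x + w) ej * (s⁻¹ * fderiv ℝ g (s⁻¹ • x) ej))| ≤ b2 := by
          have key2 := key (γD + 1 / 2) ν2 (by linarith) (by linarith) hν2.1 hν2.2 _ hY
          have hrt2 := hrtinv ν2 hν2.1 hν2.2
          have hX2e : (1 + r ^ (ν2 / (2 - ν2)) * |t|) ^ (-((γD + 1 / 2) * (2 - ν2)) - 1)
              = (1 + r ^ (ν2 / (2 - ν2)) * |t|) ^ (-((γD + 1 / 2) * (2 - ν2)))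
                * (1 + r ^ (ν2 / (2 - ν2)) * |t|) ^ (-(1:ℝ)) := by
            rw [show -((γD + 1 / 2) * (2 - ν2)) - 1
              = -((γD + 1 / 2) * (2 - ν2)) + -1 from by ring, Real.rpow_add hX2pos]
          calc |2 * (fderiv ℝ Vl (x + w) ej * (s⁻¹ * fderiv ℝ g (s⁻¹ • x) ej))|
              = 2 * (|fderiv ℝ Vl (x + w) ej| * (s⁻¹ * |fderiv ℝ g (s⁻¹ • x) ej|)) := by
                rw [abs_mul, abs_mul, abs_mul, abs_of_nonneg hsi0, abs_two]
            _ ≤ 2 * ((C1 * Real.sqrt (1 + ‖x + w‖ ^ 2) ^ (-(γD + 1 / 2)))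
                  * ((lam * (r * |t|))⁻¹ * M1)) := by
                refine mul_le_mul_of_nonneg_left ?_ (by norm_num)
                refine mul_le_mul bV1 ?_
                  (mul_nonneg hsi0 (abs_nonneg _))
                  (mul_nonneg hC1.le (Real.rpow_nonneg hYnn _))
                exact mul_le_mul hsinv bg1 (abs_nonneg _) hltinv0
            _ ≤ 2 * ((C1 * (K * (1 + r ^ (ν2 / (2 - ν2)) * |t|)
                    ^ (-((γD + 1 / 2) * (2 - ν2)))))
                  * ((lam⁻¹ * (2 * r ^ (ν2 / (2 - ν2) - 1)
                    * (1 + r ^ (ν2 / (2 - ν2)) * |t|) ^ (-(1:ℝ)))) * M1)) := by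
                refine mul_le_mul_of_nonneg_left ?_ (by norm_num)
                refine mul_le_mul (mul_le_mul_of_nonneg_left key2 hC1.le) ?_
                  (mul_nonneg hltinv0 hM10.le)
                  (mul_nonneg hC1.le (mul_nonneg hK0.le
                    (Real.rpow_nonneg hX2pos.le _)))
                refine mul_le_mul_of_nonneg_right ?_ hM10.le
                rw [mul_inv]
                exact mul_le_mul_of_nonneg_left hrt2 (inv_nonneg.2 hlam0.le)
            _ = b2 := by
                rw [hb2def, hX2e]
                field_simp
                ring
        -- term 3
        have hT3 : |Vl (x + w) * (s⁻¹ * (s⁻¹ *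
            fderiv ℝ (fun z => fderiv ℝ g z ej) (s⁻¹ • x) ej))| ≤ b3 := by
          have key3 := key γD ν3 (by linarith) (by linarith) hν3.1 hν3.2 _ hY
          have hrt3 := hrtinv ν3 hν3.1 hν3.2
          have hX3e : (1 + r ^ (ν3 / (2 - ν3)) * |t|) ^ (-(γD * (2 - ν3)) - 2)
              = (1 + r ^ (ν3 / (2 - ν3)) * |t|) ^ (-(γD * (2 - ν3)))
                * ((1 + r ^ (ν3 / (2 - ν3)) * |t|) ^ (-(1:ℝ))
                  * (1 + r ^ (ν3 / (2 - ν3)) * |t|) ^ (-(1:ℝ))) := by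
            rw [show -(γD * (2 - ν3)) - 2
              = -(γD * (2 - ν3)) + (-1 + -1) from by ring, Real.rpow_add hX3pos,
              Real.rpow_add hX3pos]
          have hre : r ^ (2 * ν3 / (2 - ν3) - 2)
              = r ^ (ν3 / (2 - ν3) - 1) * r ^ (ν3 / (2 - ν3) - 1) := by
            rw [show 2 * ν3 / (2 - ν3) - 2
              = (ν3 / (2 - ν3) - 1) + (ν3 / (2 - ν3) - 1) from by ring, Real.rpow_add hr0]
          calc |Vl (x + w) * (s⁻¹ * (s⁻¹ *
                fderiv ℝ (fun z => fderiv ℝ g z ej) (s⁻¹ • x) ej))|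
              = |Vl (x + w)| * (s⁻¹ * (s⁻¹ *
                |fderiv ℝ (fun z => fderiv ℝ g z ej) (s⁻¹ • x) ej|)) := by
                rw [abs_mul, abs_mul, abs_mul, abs_of_nonneg hsi0]
            _ ≤ (C0 * Real.sqrt (1 + ‖x + w‖ ^ 2) ^ (-γD))
                  * ((lam * (r * |t|))⁻¹ * ((lam * (r * |t|))⁻¹ * M2)) := by
                refine mul_le_mul bV0 ?_
                  (mul_nonneg hsi0 (mul_nonneg hsi0 (abs_nonneg _)))
                  (mul_nonneg hC0.le (Real.rpow_nonneg hYnn _))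
                refine mul_le_mul hsinv ?_
                  (mul_nonneg hsi0 (abs_nonneg _)) hltinv0
                exact mul_le_mul hsinv bg2 (abs_nonneg _) hltinv0
            _ ≤ (C0 * (K * (1 + r ^ (ν3 / (2 - ν3)) * |t|) ^ (-(γD * (2 - ν3)))))
                  * ((lam⁻¹ * (2 * r ^ (ν3 / (2 - ν3) - 1)
                      * (1 + r ^ (ν3 / (2 - ν3)) * |t|) ^ (-(1:ℝ))))
                    * ((lam⁻¹ * (2 * r ^ (ν3 / (2 - ν3) - 1)
                      * (1 + r ^ (ν3 / (2 - ν3)) * |t|) ^ (-(1:ℝ)))) * M2)) := by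
                have hfac : (lam * (r * |t|))⁻¹ ≤ lam⁻¹ * (2 * r ^ (ν3 / (2 - ν3) - 1)
                    * (1 + r ^ (ν3 / (2 - ν3)) * |t|) ^ (-(1:ℝ))) := by
                  rw [mul_inv]
                  exact mul_le_mul_of_nonneg_left hrt3 (inv_nonneg.2 hlam0.le)
                have hfacnn : (0:ℝ) ≤ lam⁻¹ * (2 * r ^ (ν3 / (2 - ν3) - 1)
                    * (1 + r ^ (ν3 / (2 - ν3)) * |t|) ^ (-(1:ℝ))) :=
                  mul_nonneg (inv_nonneg.2 hlam0.le)
                    (mul_nonneg (mul_nonneg (by norm_num)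
                      (Real.rpow_nonneg hr0.le _)) (Real.rpow_nonneg hX3pos.le _))
                refine mul_le_mul (mul_le_mul_of_nonneg_left key3 hC0.le) ?_
                  (mul_nonneg hltinv0 (mul_nonneg hltinv0 hM20.le))
                  (mul_nonneg hC0.le (mul_nonneg hK0.le
                    (Real.rpow_nonneg hX3pos.le _)))
                refine mul_le_mul hfac ?_
                  (mul_nonneg hltinv0 hM20.le) hfacnn
                exact mul_le_mul hfac le_rfl hM20.le hfacnn
            _ = b3 := by
                rw [hb3def, hX3e, hre]
                field_simp
                ring
        calc |fderiv ℝ (fun z => fderiv ℝ Vl z ej) (x + w) ej * g (s⁻¹ • x)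
              + 2 * (fderiv ℝ Vl (x + w) ej * (s⁻¹ * fderiv ℝ g (s⁻¹ • x) ej))
              + Vl (x + w) * (s⁻¹ * (s⁻¹ *
                fderiv ℝ (fun z => fderiv ℝ g z ej) (s⁻¹ • x) ej))|
            ≤ |fderiv ℝ (fun z => fderiv ℝ Vl z ej) (x + w) ej * g (s⁻¹ • x)
              + 2 * (fderiv ℝ Vl (x + w) ej * (s⁻¹ * fderiv ℝ g (s⁻¹ • x) ej))|
              + |Vl (x + w) * (s⁻¹ * (s⁻¹ *
                fderiv ℝ (fun z => fderiv ℝ g z ej) (s⁻¹ • x) ej))| := abs_add_le _ _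
          _ ≤ |fderiv ℝ (fun z => fderiv ℝ Vl z ej) (x + w) ej * g (s⁻¹ • x)|
              + |2 * (fderiv ℝ Vl (x + w) ej * (s⁻¹ * fderiv ℝ g (s⁻¹ • x) ej))|
              + |Vl (x + w) * (s⁻¹ * (s⁻¹ *
                fderiv ℝ (fun z => fderiv ℝ g z ej) (s⁻¹ • x) ej))| := by
              linarith [abs_add_le (fderiv ℝ (fun z => fderiv ℝ Vl z ej) (x + w) ej
                * g (s⁻¹ • x))
                (2 * (fderiv ℝ Vl (x + w) ej * (s⁻¹ * fderiv ℝ g (s⁻¹ • x) ej)))]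
          _ ≤ b1 + b2 + b3 := by linarith
      · -- far case : everything vanishes
        have hgv : g (s⁻¹ • x) = 0 := hg4 _ hc4.le
        have hg1v : fderiv ℝ g (s⁻¹ • x) ej = 0 := by
          rw [hgz1 _ hc4]
          rfl
        have hg2v : fderiv ℝ (fun z => fderiv ℝ g z ej) (s⁻¹ • x) ej = 0 := by
          rw [aux_second_apply hg'd ej, hgz2 _ hc4]
          rfl
        rw [hgv, hg1v, hg2v]
        norm_num
        linarith [hb1nn, hb2nn, hb3nn]
    calc |∑ j, fderiv ℝ (fun y => fderiv ℝ (fun x => Vl (x + w) * g (s⁻¹ • x)) y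
          (EuclideanSpace.single j 1)) x (EuclideanSpace.single j 1)|
        ≤ ∑ j, |fderiv ℝ (fun y => fderiv ℝ (fun x => Vl (x + w) * g (s⁻¹ • x)) y
          (EuclideanSpace.single j 1)) x (EuclideanSpace.single j 1)| :=
          Finset.abs_sum_le_sum_abs _ _
      _ ≤ ∑ _j : Fin n, (b1 + b2 + b3) := Finset.sum_le_sum (fun j _ => hj j)
      _ = (n:ℝ) * (b1 + b2 + b3) := by
          rw [Finset.sum_const, Finset.card_univ, Fintype.card_fin, nsmul_eq_mul]
  -- ====== conclusion ======
  rw [hcut]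
  have hnn : (0:ℝ) ≤ (n:ℝ) * (b1 + b2 + b3) :=
    mul_nonneg hn0.le (by linarith [hb1nn, hb2nn, hb3nn])
  refine le_trans (Real.iSup_le hpoint hnn) (le_of_eq ?_)
  rw [hb1def, hb2def, hb3def]
  ring
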